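/- arXiv:2001.00759 — 4 statements merged into one kernel-verified Lean document; each statement's English description precedes it below -/
import Mathlib

section
/- Let c ≥ 0 be a real number. The function f₁(x, y) = log(1 + c/(x·y)) is convex on the convex set {(x, y) ∈ ℝ² : x > 0 and y > 0}. -/
/-!
With `s = log x + log y` we have `f₁(x, y) = g s` for `g t = log (1 + c / exp t)`. The inner map
`s` is concave on the quadrant, and `g` is antitone and convex, its derivative
`-c / (exp t + c)` being increasing; a convex antitone function of a concave one is convex.
-/

open Real Set

theorem hasDerivAt_log_one_add_div_exp (c t : ℝ) (hc : 0 ≤ c) :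
    HasDerivAt (fun t => log (1 + c / exp t)) (-c / (exp t + c)) t := by
  have hexp : exp t ≠ 0 := (exp_pos t).ne'
  have hinner : HasDerivAt (fun t => 1 + c / exp t) (-(c * exp t) / exp t ^ 2) t := by
    simpa using ((hasDerivAt_const t c).div (hasDerivAt_exp t) hexp).const_add 1
  convert hinner.log (by positivity) using 1
  field_simp

theorem monotone_neg_div_exp_add (c : ℝ) (hc : 0 ≤ c) :
    Monotone fun t => -c / (exp t + c) := by
  intro s t hst
  simp only [neg_div, neg_le_neg_iff]
  gcongr

theorem convexOn_log_one_add_div_exp (c : ℝ) (hc : 0 ≤ c) :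
    ConvexOn ℝ univ fun t => log (1 + c / exp t) := by
  have hderiv := fun t => hasDerivAt_log_one_add_div_exp c t hc
  refine Monotone.convexOn_univ_of_deriv (fun t => (hderiv t).differentiableAt) ?_
  rw [funext fun t => (hderiv t).deriv]
  exact monotone_neg_div_exp_add c hc

theorem antitone_log_one_add_div_exp (c : ℝ) (hc : 0 ≤ c) :
    Antitone fun t => log (1 + c / exp t) := by
  intro s t hst
  apply log_le_log (by positivity)
  gcongr

theorem concaveOn_log_fst_add_log_snd :
    ConcaveOn ℝ {p : ℝ × ℝ | 0 < p.1 ∧ 0 < p.2} fun p => log p.1 + log p.2 := by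
  have hquad : Convex ℝ {p : ℝ × ℝ | 0 < p.1 ∧ 0 < p.2} :=
    (convex_Ioi 0).prod (convex_Ioi 0)
  have hlog : ConcaveOn ℝ (Ioi 0) log := strictConcaveOn_log_Ioi.concaveOn
  exact ((hlog.comp_linearMap (LinearMap.fst ℝ ℝ ℝ)).subset (fun p hp => hp.1) hquad).add
    ((hlog.comp_linearMap (LinearMap.snd ℝ ℝ ℝ)).subset (fun p hp => hp.2) hquad)

/-- Joint convexity of `f₁(x, y) = log(1 + c/(x y))` on the open positive quadrant
(equation (27) of the paper). -/
theorem log_one_add_div_mul_convexOn (c : ℝ) (hc : 0 ≤ c) :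
    ConvexOn ℝ {p : ℝ × ℝ | 0 < p.1 ∧ 0 < p.2}
      (fun p : ℝ × ℝ => Real.log (1 + c / (p.1 * p.2))) := by
  set quadrant := {p : ℝ × ℝ | 0 < p.1 ∧ 0 < p.2}
  have himage : (fun p : ℝ × ℝ => log p.1 + log p.2) '' quadrant = univ :=
    eq_univ_of_forall fun t => ⟨(exp t, 1), ⟨exp_pos t, one_pos⟩, by simp⟩
  have hconvex := ConvexOn.comp_concaveOn (himage ▸ convexOn_log_one_add_div_exp c hc)
    concaveOn_log_fst_add_log_snd ((antitone_log_one_add_div_exp c hc).antitoneOn _)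
  refine hconvex.congr fun p ⟨hx, hy⟩ => ?_
  simp only [Function.comp_apply, exp_add, exp_log hx, exp_log hy]
end

section
/- Let c ≥ 0 and let x, y, x̃, ỹ be positive real numbers. Then log₂(1 + c/(x·y)) ≥ log₂(1 + c/(x̃·ỹ)) − c·(x − x̃)/(x̃·(x̃·ỹ + c)·ln 2) − c·(y − ỹ)/(ỹ·(x̃·ỹ + c)·ln 2). -/
/-!
Write `a = x̃ỹ` and `b = xy`. Since `log (1 + c/b) = log (b + c) - log b`, the function is
`h (log b)` with `h s = log (exp s + c) - s` convex; its tangent line at `log a` has slope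
`-c/(a + c) ≤ 0`, so it suffices to bound `log b - log a` from above, which
`log t ≤ t - 1` does coordinatewise.
-/

open Real

namespace Real

lemma log_sub_log_le_sub_div {x y : ℝ} (hx : 0 < x) (hy : 0 < y) :
    log x - log y ≤ (x - y) / y := by
  have h := log_le_sub_one_of_pos (div_pos hx hy)
  rwa [log_div hx.ne' hy.ne', div_sub_one hy.ne'] at h

lemma div_add_mul_log_sub_log_le_log_add_sub_log_add
    {a b c : ℝ} (ha : 0 < a) (hb : 0 < b) (hc : 0 ≤ c) :
    a / (a + c) * (log b - log a) ≤ log (b + c) - log (a + c) := by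
  have hac : 0 < a + c := by positivity
  have hw : a / (a + c) + c / (a + c) = 1 := by field_simp
  -- Concavity of `log` at the convex combination `b + c` of `b (a + c) / a` and `a + c`.
  have hconc := strictConcaveOn_log_Ioi.concaveOn.2
    (Set.mem_Ioi.2 (by positivity : 0 < b * (a + c) / a)) (Set.mem_Ioi.2 hac)
    (by positivity : 0 ≤ a / (a + c)) (by positivity : 0 ≤ c / (a + c)) hw
  have hcomb : (a / (a + c)) • (b * (a + c) / a) + (c / (a + c)) • (a + c) = b + c := by
    simp only [smul_eq_mul]; field_simp
  rw [hcomb, smul_eq_mul, smul_eq_mul, log_div (by positivity) ha.ne',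
    log_mul hb.ne' hac.ne'] at hconc
  linear_combination hconc - log (a + c) * hw

lemma neg_div_add_mul_log_sub_log_le_log_one_add_div_sub
    {a b c : ℝ} (ha : 0 < a) (hb : 0 < b) (hc : 0 ≤ c) :
    -(c / (a + c)) * (log b - log a) ≤ log (1 + c / b) - log (1 + c / a) := by
  have hac : 0 < a + c := by positivity
  have hw : a / (a + c) + c / (a + c) = 1 := by field_simp
  rw [one_add_div hb.ne', one_add_div ha.ne', log_div (by positivity) hb.ne',
    log_div hac.ne' ha.ne']
  linear_combination
    div_add_mul_log_sub_log_le_log_add_sub_log_add ha hb hc - (log b - log a) * hw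

end Real

/-- Inequality (28) of the paper: the jointly convex function `log₂(1 + c/(x y))` is bounded
below by its first-order Taylor expansion at any point `(x̃, ỹ)` of the positive quadrant. -/
theorem logb_one_add_div_mul_first_order_bound
    (c x y xt yt : ℝ) (hc : 0 ≤ c)
    (hx : 0 < x) (hy : 0 < y) (hxt : 0 < xt) (hyt : 0 < yt) :
    Real.logb 2 (1 + c / (xt * yt))
        - c * (x - xt) / (xt * (xt * yt + c) * Real.log 2)
        - c * (y - yt) / (yt * (xt * yt + c) * Real.log 2)
      ≤ Real.logb 2 (1 + c / (x * y)) := by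
  have hlog2 : 0 < log 2 := log_pos one_lt_two
  have hD : 0 < xt * yt + c := by positivity
  have htangent :=
    neg_div_add_mul_log_sub_log_le_log_one_add_div_sub (mul_pos hxt hyt) (mul_pos hx hy) hc
  have hgrowth : log (x * y) - log (xt * yt) ≤ (x - xt) / xt + (y - yt) / yt := by
    rw [log_mul hx.ne' hy.ne', log_mul hxt.ne' hyt.ne']
    linarith [log_sub_log_le_sub_div hx hxt, log_sub_log_le_sub_div hy hyt]
  have hslope := mul_le_mul_of_nonneg_left hgrowth (by positivity : 0 ≤ c / (xt * yt + c))
  have hsplit : c / (xt * yt + c) * ((x - xt) / xt + (y - yt) / yt)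
      = c * (x - xt) / (xt * (xt * yt + c)) + c * (y - yt) / (yt * (xt * yt + c)) := by
    field_simp
  calc logb 2 (1 + c / (xt * yt))
        - c * (x - xt) / (xt * (xt * yt + c) * log 2)
        - c * (y - yt) / (yt * (xt * yt + c) * log 2)
      = (log (1 + c / (xt * yt)) - c * (x - xt) / (xt * (xt * yt + c))
          - c * (y - yt) / (yt * (xt * yt + c))) / log 2 := by
        rw [logb]; field_simp
    _ ≤ log (1 + c / (x * y)) / log 2 := by gcongr; linarith
end

section
/- Let n be a natural number and let x, x̃ ∈ ℝⁿ have all coordinates positive. Then ∏_{i=1}^{n} 1/x_i ≥ (∏_{i=1}^{n} 1/x̃_i) · ( n + 1 − ∑_{i=1}^{n} x_i/x̃_i ). -/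
/-!
With `t i = x i / x̃ i`, the claim is `n + 1 - ∑ t i ≤ ∏ (t i)⁻¹` scaled by `∏ 1 / x̃ i`. The `n + 1`
positive numbers `t 1, …, t n, ∏ (t i)⁻¹` have product `1`, so by AM-GM their sum is at least `n + 1`.
-/

open Finset

theorem Real.card_le_sum_of_prod_eq_one {ι : Type*} (s : Finset ι) {z : ι → ℝ}
    (hz : ∀ i ∈ s, 0 ≤ z i) (hprod : ∏ i ∈ s, z i = 1) : (#s : ℝ) ≤ ∑ i ∈ s, z i := by
  rcases s.eq_empty_or_nonempty with rfl | hs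
  · simp
  have hcard : (0 : ℝ) < #s := by exact_mod_cast hs.card_pos
  have amgm := Real.geom_mean_le_arith_mean s (fun _ ↦ 1) z (fun _ _ ↦ zero_le_one)
    (by simpa using hcard) hz
  simp only [Real.rpow_one, hprod, Real.one_rpow, sum_const, nsmul_eq_mul, mul_one, one_mul]
    at amgm
  rwa [le_div_iff₀ hcard, one_mul] at amgm

theorem Real.card_add_one_sub_sum_le_prod_inv {ι : Type*} [Fintype ι] {t : ι → ℝ}
    (ht : ∀ i, 0 < t i) : (Fintype.card ι : ℝ) + 1 - ∑ i, t i ≤ ∏ i, (t i)⁻¹ := by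
  have hprod_pos : 0 < ∏ i, (t i)⁻¹ := prod_pos fun i _ ↦ inv_pos.2 (ht i)
  let z : Option ι → ℝ := fun o ↦ o.elim (∏ i, (t i)⁻¹) t
  have hz : ∀ o ∈ (univ : Finset (Option ι)), 0 ≤ z o := by
    rintro (_ | i) _
    exacts [hprod_pos.le, (ht i).le]
  have hzprod : ∏ o, z o = 1 := by
    rw [Fintype.prod_option]
    change (∏ i, (t i)⁻¹) * ∏ i, t i = 1
    rw [prod_inv_distrib]
    exact inv_mul_cancel₀ (prod_pos fun i _ ↦ ht i).ne'
  have key := Real.card_le_sum_of_prod_eq_one univ hz hzprod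
  rw [card_univ, Fintype.card_option, Fintype.sum_option] at key
  change ((Fintype.card ι + 1 : ℕ) : ℝ) ≤ (∏ i, (t i)⁻¹) + ∑ i, t i at key
  push_cast at key
  linarith

/-- First-order lower bound (inequality (33) of the paper) of the jointly convex function
`x ↦ ∏_i 1/x_i` at a point `x̃` with positive coordinates. -/
theorem prod_inv_first_order_bound (n : ℕ) (x xt : Fin n → ℝ)
    (hx : ∀ i, 0 < x i) (hxt : ∀ i, 0 < xt i) :
    (∏ i, 1 / xt i) * ((n : ℝ) + 1 - ∑ i, x i / xt i) ≤ ∏ i, 1 / x i := by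
  have key := Real.card_add_one_sub_sum_le_prod_inv fun i ↦ div_pos (hx i) (hxt i)
  rw [Fintype.card_fin] at key
  calc (∏ i, 1 / xt i) * ((n : ℝ) + 1 - ∑ i, x i / xt i)
      ≤ (∏ i, 1 / xt i) * ∏ i, (x i / xt i)⁻¹ :=
        mul_le_mul_of_nonneg_left key (prod_pos fun i _ ↦ one_div_pos.2 (hxt i)).le
    _ = ∏ i, 1 / x i := by
        rw [← prod_mul_distrib]
        refine prod_congr rfl fun i _ ↦ ?_
        field_simp [(hx i).ne', (hxt i).ne']
end

section
/- Let c, ς, τ be positive real numbers and let θ > 1 and θ̃ > 1. If c·√(ς·τ) ≥ −ln(1 − 1/θ̃) − 2 + 2·√(1 − 1/θ̃)/√(1 − 1/θ), then exp( −c·√(ς·τ) ) ≤ 1 − 1/θ. Moreover, when θ = θ̃ the two inequalities are equivalent. -/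
open Real

lemma log_lower_bound {x xt : ℝ} (hx : 0 < x) (hxt : 0 < xt) :
    Real.log xt + 2 - 2 * Real.sqrt xt / Real.sqrt x ≤ Real.log x := by
  have hsx : 0 < Real.sqrt x := Real.sqrt_pos.mpr hx
  have hsxt : 0 < Real.sqrt xt := Real.sqrt_pos.mpr hxt
  have ht : 0 < Real.sqrt xt / Real.sqrt x := div_pos hsxt hsx
  have h1 : Real.log (Real.sqrt xt / Real.sqrt x) ≤ Real.sqrt xt / Real.sqrt x - 1 :=
    Real.log_le_sub_one_of_pos ht
  have h2 : Real.log (Real.sqrt xt / Real.sqrt x)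
      = Real.log xt / 2 - Real.log x / 2 := by
    rw [Real.log_div (ne_of_gt hsxt) (ne_of_gt hsx), Real.log_sqrt hxt.le,
      Real.log_sqrt hx.le]
  have h3 : 2 * Real.sqrt xt / Real.sqrt x = 2 * (Real.sqrt xt / Real.sqrt x) := mul_div_assoc _ _ _
  linarith
/-- Safe approximation of the exponential cone constraint (constraint (52) of the paper):
the restrictive constraint
`c √(ς τ) ≥ −ln(1 − 1/θ̃) − 2 + 2 √(1 − 1/θ̃)/√(1 − 1/θ)`
implies the original constraint `exp(−c √(ς τ)) ≤ 1 − 1/θ`, and the two are equivalent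
at the expansion point `θ = θ̃`. -/
theorem exp_cone_safe_approximation (c ς τ θ θt : ℝ)
    (hc : 0 < c) (hς : 0 < ς) (hτ : 0 < τ) (hθ : 1 < θ) (hθt : 1 < θt) :
    ((-Real.log (1 - 1 / θt) - 2 + 2 * Real.sqrt (1 - 1 / θt) / Real.sqrt (1 - 1 / θ)
        ≤ c * Real.sqrt (ς * τ)) →
      Real.exp (-(c * Real.sqrt (ς * τ))) ≤ 1 - 1 / θ) ∧
    (θ = θt →
      ((-Real.log (1 - 1 / θt) - 2 + 2 * Real.sqrt (1 - 1 / θt) / Real.sqrt (1 - 1 / θ)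
          ≤ c * Real.sqrt (ς * τ)) ↔
        Real.exp (-(c * Real.sqrt (ς * τ))) ≤ 1 - 1 / θ)) := by
  have hx : (0 : ℝ) < 1 - 1 / θ := by
    have : 1 / θ < 1 := by
      rw [div_lt_one (by linarith)]; linarith
    linarith
  have hxt : (0 : ℝ) < 1 - 1 / θt := by
    have : 1 / θt < 1 := by
      rw [div_lt_one (by linarith)]; linarith
    linarith
  have key := log_lower_bound hx hxt
  constructor
  · intro h
    have : -(c * Real.sqrt (ς * τ)) ≤ Real.log (1 - 1 / θ) := by linarith
    calc Real.exp (-(c * Real.sqrt (ς * τ))) ≤ Real.exp (Real.log (1 - 1 / θ)) :=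
          Real.exp_le_exp.mpr this
      _ = 1 - 1 / θ := Real.exp_log hx
  · intro heq
    subst heq
    have hs : Real.sqrt (1 - 1 / θ) ≠ 0 := ne_of_gt (Real.sqrt_pos.mpr hx)
    have hdiv : 2 * Real.sqrt (1 - 1 / θ) / Real.sqrt (1 - 1 / θ) = 2 := by
      rw [mul_div_assoc, div_self hs, mul_one]
    rw [hdiv]
    constructor
    · intro h
      have : -(c * Real.sqrt (ς * τ)) ≤ Real.log (1 - 1 / θ) := by linarith
      calc Real.exp (-(c * Real.sqrt (ς * τ))) ≤ Real.exp (Real.log (1 - 1 / θ)) :=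
            Real.exp_le_exp.mpr this
        _ = 1 - 1 / θ := Real.exp_log hx
    · intro h
      have := Real.log_le_log (Real.exp_pos _) h
      rw [Real.log_exp] at this
      linarith
end
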